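/- Let G be a finite p-group in which every maximal subgroup M satisfies d(M) = d(G) − 1. Then every subgroup of index p^2 in G is normal. -/

import Mathlib

set_option linter.unusedSectionVars false
set_option linter.unusedVariables false

open Subgroup
open scoped commutatorElement

section Basic
variable {p : ℕ} {G : Type*} [Group G] [Finite G]

lemma auxP_coatom_normal (hp : p.Prime) (hG : IsPGroup p G) {M : Subgroup G}
    (hM : IsCoatom M) : M.Normal := by
  haveI : Fact p.Prime := ⟨hp⟩
  haveI : Group.IsNilpotent G := hG.isNilpotent
  exact NormalizerCondition.normal_of_coatom M normalizerCondition_of_isNilpotent hM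

lemma auxP_quot_simple {M : Subgroup G} (hM : IsCoatom M) [M.Normal]
    (K : Subgroup (G ⧸ M)) : K = ⊥ ∨ K = ⊤ := by
  set π := QuotientGroup.mk' M
  have hle : M ≤ K.comap π := by
    intro x hx
    simp only [mem_comap]
    have : π x = 1 := (QuotientGroup.eq_one_iff x).2 hx
    rw [this]; exact K.one_mem
  have hsurj : Function.Surjective π := QuotientGroup.mk'_surjective M
  rcases eq_or_lt_of_le hle with h | h
  · left
    have : K = map π (K.comap π) := (map_comap_eq_self_of_surjective hsurj K).symm
    rw [this, ← h]
    ext y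
    simp only [mem_map, mem_bot]
    constructor
    · rintro ⟨x, hx, rfl⟩; exact (QuotientGroup.eq_one_iff x).2 hx
    · rintro rfl; exact ⟨1, M.one_mem, map_one π⟩
  · right
    have := hM.2 _ h
    rw [← map_comap_eq_self_of_surjective hsurj K, this]
    exact map_top_of_surjective π hsurj

lemma auxP_coatom_index (hp : p.Prime) (hG : IsPGroup p G) {M : Subgroup G}
    (hM : IsCoatom M) [M.Normal] : M.index = p := by
  haveI : Fact p.Prime := ⟨hp⟩
  have hQ : IsPGroup p (G ⧸ M) := hG.to_quotient M
  have hnt : Nontrivial (G ⧸ M) := by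
    by_contra h
    have : Subsingleton (G ⧸ M) := not_nontrivial_iff_subsingleton.mp h
    exact hM.1 (Subgroup.index_eq_one.mp (Nat.le_antisymm
      (Finite.card_le_one_iff_subsingleton.mpr this) (Nat.one_le_iff_ne_zero.mpr Subgroup.index_ne_zero_of_finite)))
  obtain ⟨n, hn⟩ := IsPGroup.iff_card.mp hQ
  have hdvd : p ∣ Nat.card (G ⧸ M) := by
    rcases n with _ | n
    · simp at hn
      exact absurd (Finite.card_le_one_iff_subsingleton.mp hn.le) (not_subsingleton _)
    · rw [hn]; exact dvd_pow_self p n.succ_ne_zero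
  obtain ⟨x, hx⟩ := exists_prime_orderOf_dvd_card' p hdvd
  have hxne : x ≠ 1 := by
    intro h; rw [h, orderOf_one] at hx; exact hp.one_lt.ne' hx.symm
  have : Subgroup.zpowers x = ⊤ := by
    rcases auxP_quot_simple hM (Subgroup.zpowers x) with h | h
    · exact absurd (h ▸ Subgroup.mem_zpowers x) (by simp [hxne])
    · exact h
  have hcard : Nat.card (G ⧸ M) = p := by
    rw [← hx, ← Nat.card_zpowers x, this]
    exact (Nat.card_congr Subgroup.topEquiv.toEquiv).symm
  rwa [Subgroup.index_eq_card]

end Basic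
section Two
variable {p : ℕ} {G : Type*} [Group G] [Finite G]

lemma auxP_commutator_mem (hp : p.Prime) (hG : IsPGroup p G) {M : Subgroup G}
    (hM : IsCoatom M) (x y : G) : ⁅x, y⁆ ∈ M := by
  haveI : Fact p.Prime := ⟨hp⟩
  haveI := auxP_coatom_normal hp hG hM
  have hidx : M.index = p := auxP_coatom_index hp hG hM
  have hcard : Nat.card (G ⧸ M) = p := by rw [← Subgroup.index_eq_card, hidx]
  have hcyc : IsCyclic (G ⧸ M) := isCyclic_of_prime_card hcard
  letI : CommGroup (G ⧸ M) := hcyc.commGroup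
  rw [← QuotientGroup.eq_one_iff]
  have : ((⁅x, y⁆ : G) : G ⧸ M) = ⁅(x : G ⧸ M), (y : G ⧸ M)⁆ :=
    map_commutatorElement (QuotientGroup.mk' M) x y
  rw [this, commutatorElement_eq_one_iff_mul_comm]
  exact mul_comm _ _

lemma auxP_pow_mem (hp : p.Prime) (hG : IsPGroup p G) {M : Subgroup G}
    (hM : IsCoatom M) (x : G) : x ^ p ∈ M := by
  haveI := auxP_coatom_normal hp hG hM
  have hidx : M.index = p := auxP_coatom_index hp hG hM
  simpa [hidx] using M.pow_index_mem x

lemma auxP_mem_frattini {x : G} (h : ∀ M : Subgroup G, IsCoatom M → x ∈ M) :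
    x ∈ frattini G := by
  simp only [frattini, Order.radical, Subgroup.mem_iInf]
  exact h

lemma auxP_normal_of_frattini_le (hp : p.Prime) (hG : IsPGroup p G) {H : Subgroup G}
    (h : frattini G ≤ H) : H.Normal := by
  constructor
  intro n hn g
  have hc : ⁅g, n⁆ ∈ H :=
    h (auxP_mem_frattini fun M hM => auxP_commutator_mem hp hG hM g n)
  have : g * n * g⁻¹ = ⁅g, n⁆ * n := by group
  rw [this]
  exact H.mul_mem hc hn

end Two


lemma auxP_span_top {p : ℕ} [NeZero p] {Q : Type*} [CommGroup Q]
    [Module (ZMod p) (Additive Q)] (s : Set Q) :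
    Subgroup.closure s = ⊤ ↔ Submodule.span (ZMod p) (Additive.ofMul '' s) = ⊤ := by
  constructor
  · intro h
    rw [eq_top_iff]
    intro v _
    have hv : Additive.toMul v ∈ Subgroup.closure s := h ▸ Subgroup.mem_top _
    have key : ∀ x : Q, x ∈ Subgroup.closure s →
        Additive.ofMul x ∈ Submodule.span (ZMod p) (Additive.ofMul '' s) := by
      intro x hx
      induction hx using Subgroup.closure_induction with
      | mem x hx => exact Submodule.subset_span ⟨x, hx, rfl⟩
      | one => exact Submodule.zero_mem _
      | mul x y hx hy px py => exact Submodule.add_mem _ px py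
      | inv x hx px => exact Submodule.neg_mem _ px
    exact key _ hv
  · intro h
    rw [eq_top_iff]
    intro x _
    have hx : Additive.ofMul x ∈ Submodule.span (ZMod p) (Additive.ofMul '' s) :=
      h ▸ Submodule.mem_top
    have key : ∀ v : Additive Q, v ∈ Submodule.span (ZMod p) (Additive.ofMul '' s) →
        Additive.toMul v ∈ Subgroup.closure s := by
      intro v hv
      induction hv using Submodule.span_induction with
      | mem v hv => obtain ⟨y, hy, rfl⟩ := hv; exact Subgroup.subset_closure hy
      | zero => exact Subgroup.one_mem _
      | add v w hv hw pv pw => exact Subgroup.mul_mem _ pv pw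
      | smul c v hv pv =>
          have : c • v = (c.val : ℕ) • v := by
            conv_lhs => rw [show c = ((c.val : ℕ) : ZMod p) from
              ((ZMod.natCast_val c).trans (ZMod.cast_id p c)).symm]
            rw [Nat.cast_smul_eq_nsmul]
          rw [this]
          have : Additive.toMul ((c.val : ℕ) • v) = (Additive.toMul v) ^ c.val :=
            toMul_nsmul _ _
          rw [this]
          exact Subgroup.pow_mem _ pv _
    exact key _ hx



lemma auxP_card_eq_pow_rank {p : ℕ} (hp : p.Prime) {Q : Type*} [CommGroup Q] [Finite Q]
    [Module (ZMod p) (Additive Q)] : Nat.card Q = p ^ Group.rank Q := by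
  haveI : Fact p.Prime := ⟨hp⟩
  haveI : NeZero p := ⟨hp.ne_zero⟩
  classical
  letI : Fintype (Additive Q) := Fintype.ofFinite _
  letI : Fintype Q := Fintype.ofFinite _
  have h1 : Group.rank Q = Module.finrank (ZMod p) (Additive Q) := by
    apply le_antisymm
    · set bs := Module.Basis.ofVectorSpaceIndex (ZMod p) (Additive Q) with hbs
      haveI : Fintype ↑bs := Set.Finite.fintype (Set.toFinite _)
      have hspan : Submodule.span (ZMod p) bs = ⊤ := by
        have hb := (Module.Basis.ofVectorSpace (ZMod p) (Additive Q)).span_eq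
        rwa [Module.Basis.range_ofVectorSpace] at hb
      set T : Finset Q := bs.toFinset.image Additive.toMul with hT
      have hTcl : Subgroup.closure (T : Set Q) = ⊤ := by
        rw [auxP_span_top (p := p)]
        have h2 : Additive.ofMul '' (T : Set Q) = bs := by
          rw [hT]
          ext v
          simp [Finset.coe_image, Set.image_image, Set.coe_toFinset]
        rw [h2, hspan]
      have hcard : T.card ≤ Module.finrank (ZMod p) (Additive Q) := by
        have h3 : T.card ≤ bs.toFinset.card := Finset.card_image_le
        have hrk : Module.finrank (ZMod p) (Additive Q) = bs.toFinset.card := by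
          rw [Module.finrank_eq_card_basis (Module.Basis.ofVectorSpace (ZMod p) (Additive Q)),
            Set.toFinset_card]
        omega
      exact le_trans (Group.rank_le hTcl) hcard
    · obtain ⟨S, hcard, htop⟩ := Group.rank_spec Q
      have hsp : Submodule.span (ZMod p) (Additive.ofMul '' (S : Set Q)) = ⊤ :=
        (auxP_span_top _).mp htop
      set S' : Finset (Additive Q) := S.image Additive.ofMul with hS'
      have hco : Additive.ofMul '' (S : Set Q) = (S' : Set (Additive Q)) :=
        (Finset.coe_image).symm
      rw [hco] at hsp
      have hle := finrank_span_le_card (R := ZMod p) (S' : Set (Additive Q))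
      rw [hsp, finrank_top] at hle
      simp only [Finset.toFinset_coe] at hle
      calc Module.finrank (ZMod p) (Additive Q) ≤ S'.card := hle
        _ ≤ S.card := Finset.card_image_le
        _ = Group.rank Q := hcard
  have h2 : Nat.card Q = p ^ Module.finrank (ZMod p) (Additive Q) := by
    have hc := Module.card_eq_pow_finrank (K := ZMod p) (V := Additive Q)
    rw [ZMod.card] at hc
    rw [Nat.card_eq_fintype_card]
    rw [show Fintype.card Q = Fintype.card (Additive Q) from
      Fintype.card_congr Additive.ofMul]
    exact hc
  rw [h2, h1]

lemma auxP_frattini_index {p : ℕ} {G : Type*} [Group G] [Finite G]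
    (hp : p.Prime) (hG : IsPGroup p G) :
    (frattini G).index = p ^ Group.rank G := by
  haveI : Fact p.Prime := ⟨hp⟩
  haveI : NeZero p := ⟨hp.ne_zero⟩
  set F := frattini G with hFdef
  have hcomm : ∀ a b : G ⧸ F, a * b = b * a := by
    intro a b
    obtain ⟨x, rfl⟩ := QuotientGroup.mk_surjective a
    obtain ⟨y, rfl⟩ := QuotientGroup.mk_surjective b
    rw [← QuotientGroup.mk_mul, ← QuotientGroup.mk_mul]
    apply (QuotientGroup.eq (s := F)).mpr
    have h1 : ⁅y⁻¹, x⁻¹⁆ ∈ F :=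
      auxP_mem_frattini fun M hM => auxP_commutator_mem hp hG hM _ _
    have : (x * y)⁻¹ * (y * x) = ⁅y⁻¹, x⁻¹⁆ := by group
    rw [this]; exact h1
  letI : CommGroup (G ⧸ F) := { (inferInstance : Group (G ⧸ F)) with mul_comm := hcomm }
  have hpow : ∀ a : G ⧸ F, a ^ p = 1 := by
    intro a
    obtain ⟨x, rfl⟩ := QuotientGroup.mk_surjective a
    rw [← QuotientGroup.mk_pow, QuotientGroup.eq_one_iff]
    exact auxP_mem_frattini fun M hM => auxP_pow_mem hp hG hM x
  letI : Module (ZMod p) (Additive (G ⧸ F)) := AddCommGroup.zmodModule (by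
    intro v
    apply Additive.toMul.injective
    rw [toMul_nsmul]
    exact hpow _)
  have hcardQ : Nat.card (G ⧸ F) = p ^ Group.rank (G ⧸ F) := auxP_card_eq_pow_rank hp
  have hrank : Group.rank G = Group.rank (G ⧸ F) := by
    apply le_antisymm
    · -- lift generators
      obtain ⟨S, hcard, htop⟩ := Group.rank_spec (G ⧸ F)
      classical
      set T : Finset G := S.image Quotient.out with hT
      have himg : (QuotientGroup.mk' F) '' (T : Set G) = (S : Set (G ⧸ F)) := by
        ext q
        simp only [hT, Finset.coe_image, Set.image_image]
        constructor
        · rintro ⟨y, hy, rfl⟩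
          simpa [Quotient.out_eq'] using hy
        · intro hq
          exact ⟨q, hq, by simp [Quotient.out_eq']⟩
      have hmaps : Subgroup.map (QuotientGroup.mk' F) (Subgroup.closure (T : Set G)) = ⊤ := by
        rw [MonoidHom.map_closure, himg, htop]
      have hsup : Subgroup.closure (T : Set G) ⊔ F = ⊤ := by
        rw [eq_top_iff]
        intro g _
        have hg : (QuotientGroup.mk' F) g ∈
            Subgroup.map (QuotientGroup.mk' F) (Subgroup.closure (T : Set G)) := by
          rw [hmaps]; exact Subgroup.mem_top _
        obtain ⟨k, hk, hkg⟩ := hg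
        have hmem : k⁻¹ * g ∈ F := by
          have : (QuotientGroup.mk' F) (k⁻¹ * g) = 1 := by
            rw [map_mul, map_inv, hkg]
            group
          rwa [← MonoidHom.mem_ker, QuotientGroup.ker_mk'] at this
        have : g = k * (k⁻¹ * g) := by group
        rw [this]
        exact Subgroup.mul_mem _ (le_sup_left (α := Subgroup G) hk)
          (le_sup_right (α := Subgroup G) hmem)
      have htopT : Subgroup.closure (T : Set G) = ⊤ := frattini_nongenerating hsup
      calc Group.rank G ≤ T.card := Group.rank_le htopT
        _ ≤ S.card := Finset.card_image_le
        _ = Group.rank (G ⧸ F) := hcard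
    · exact Group.rank_le_of_surjective (QuotientGroup.mk' F) (QuotientGroup.mk'_surjective F)
  rw [Subgroup.index_eq_card, hcardQ, hrank]

lemma auxP_coatom_of_index_prime {p : ℕ} {G : Type*} [Group G] (hp : p.Prime)
    {K : Subgroup G} (h : K.index = p) : IsCoatom K := by
  constructor
  · intro htop
    rw [htop, Subgroup.index_top] at h
    exact hp.one_lt.ne h
  · intro L hKL
    have h1 := Subgroup.relIndex_mul_index hKL.le
    rw [h] at h1
    have hdvd : L.index ∣ p := Dvd.intro_left _ h1
    rcases (Nat.Prime.eq_one_or_self_of_dvd hp _ hdvd) with h2 | h2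
    · exact Subgroup.index_eq_one.mp h2
    · rw [h2] at h1
      have : K.relIndex L = 1 := by
        have hp0 : p ≠ 0 := hp.ne_zero
        exact Nat.eq_of_mul_eq_mul_right hp.pos (by simpa using h1)
      exact absurd (Subgroup.relIndex_eq_one.mp this) (not_le_of_gt hKL)

lemma auxP_frattini_map_le {p : ℕ} {G : Type*} [Group G] [Finite G] (hp : p.Prime)
    (hG : IsPGroup p G) {M : Subgroup G} (hM : IsCoatom M) [M.Normal] :
    Subgroup.map M.subtype (frattini ↥M) ≤ frattini G := by
  set Fm := Subgroup.map M.subtype (frattini ↥M) with hFm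
  haveI : Fm.Normal := inferInstance
  have hFmM : Fm ≤ M := Subgroup.map_subtype_le _
  simp only [frattini, Order.radical, le_iInf_iff]
  intro K hK
  by_contra hnot
  have hlt : K < Fm ⊔ K := right_lt_sup.mpr hnot
  have hsup : Fm ⊔ K = ⊤ := hK.2 _ hlt
  have hsupM : frattini ↥M ⊔ K.subgroupOf M = ⊤ := by
    rw [eq_top_iff]
    intro m _
    have hmem : (↑m : G) ∈ Fm ⊔ K := by rw [hsup]; exact Subgroup.mem_top _
    rw [← SetLike.mem_coe, Subgroup.normal_mul] at hmem
    obtain ⟨f, hf, k, hk, hfk⟩ := hmem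
    have hfM : f ∈ M := hFmM hf
    have hkM : k ∈ M := by
      have : k = f⁻¹ * ↑m := by rw [← hfk]; group
      rw [this]
      exact M.mul_mem (M.inv_mem hfM) m.2
    have hf' : (⟨f, hfM⟩ : ↥M) ∈ frattini ↥M := by
      obtain ⟨f0, hf0, hf0e⟩ := hf
      have : (⟨f, hfM⟩ : ↥M) = f0 := by
        apply Subtype.ext
        simp [← hf0e]
      rw [this]; exact hf0
    have hk' : (⟨k, hkM⟩ : ↥M) ∈ K.subgroupOf M := hk
    have hm : m = (⟨f, hfM⟩ : ↥M) * ⟨k, hkM⟩ := by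
      apply Subtype.ext
      simp [hfk]
    rw [hm]
    exact Subgroup.mul_mem _ (le_sup_left (α := Subgroup ↥M) hf')
      (le_sup_right (α := Subgroup ↥M) hk')
  have : K.subgroupOf M = ⊤ := frattini_nongenerating (by rwa [sup_comm] at hsupM)
  have hMK : M ≤ K := Subgroup.subgroupOf_eq_top.mp this
  exact hnot (le_trans hFmM hMK)

theorem auxP_main {p : ℕ} (hp : p.Prime) {G : Type*} [Group G] [Finite G]
    (hG : IsPGroup p G)
    (hmax : ∀ M : Subgroup G, IsCoatom M → Group.rank M = Group.rank G - 1) :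
    ∀ H : Subgroup G, H.index = p ^ 2 → H.Normal := by
  intro H hH
  haveI : Fact p.Prime := ⟨hp⟩
  have hp2 : (p : ℕ) ^ 2 ≠ 1 := Nat.ne_of_gt (Nat.one_lt_pow two_ne_zero hp.one_lt)
  have hne : H ≠ ⊤ := by
    intro h
    rw [h, Subgroup.index_top] at hH
    exact hp2 hH.symm
  obtain ⟨M, hM, hHM⟩ := (eq_top_or_exists_le_coatom H).resolve_left hne
  haveI hMnormal : M.Normal := auxP_coatom_normal hp hG hM
  have hMidx : M.index = p := auxP_coatom_index hp hG hM
  -- G nontrivial, rank ≥ 1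
  have hnontriv : Nontrivial G := by
    by_contra hcon
    have : Subsingleton G := not_nontrivial_iff_subsingleton.mp hcon
    apply hne
    rw [eq_top_iff]
    intro x _
    have : x = 1 := Subsingleton.elim x 1
    rw [this]; exact H.one_mem
  have hrank1 : 1 ≤ Group.rank G := by
    by_contra hcon
    have h0 : Group.rank G = 0 := by omega
    obtain ⟨S, hScard, hStop⟩ := Group.rank_spec G
    rw [h0, Finset.card_eq_zero] at hScard
    rw [hScard] at hStop
    simp only [Finset.coe_empty, Subgroup.closure_empty] at hStop
    obtain ⟨x, y, hxy⟩ := hnontriv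
    apply hxy
    have hx : x ∈ (⊥ : Subgroup G) := hStop ▸ Subgroup.mem_top x
    have hy : y ∈ (⊥ : Subgroup G) := hStop ▸ Subgroup.mem_top y
    rw [Subgroup.mem_bot] at hx hy
    rw [hx, hy]
  -- H.subgroupOf M is a coatom of M
  have hrel : H.relIndex M = p := by
    have h := Subgroup.relIndex_mul_index hHM
    rw [hMidx, hH, sq] at h
    exact Nat.eq_of_mul_eq_mul_right hp.pos h
  have hHsub : IsCoatom (H.subgroupOf M) := auxP_coatom_of_index_prime hp hrel
  have hfratM : frattini ↥M ≤ H.subgroupOf M := frattini_le_coatom hHsub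
  have hFmH : Subgroup.map M.subtype (frattini ↥M) ≤ H := by
    refine le_trans (Subgroup.map_mono hfratM) ?_
    rw [Subgroup.subgroupOf_map_subtype]
    exact inf_le_left
  have hFmle : Subgroup.map M.subtype (frattini ↥M) ≤ frattini G :=
    auxP_frattini_map_le hp hG hM
  -- index computation
  have hidxFm : (Subgroup.map M.subtype (frattini ↥M)).index = p ^ Group.rank G := by
    rw [Subgroup.index_map_subtype, hMidx,
      auxP_frattini_index hp (IsPGroup.to_subgroup hG M), hmax M hM]
    rw [← pow_succ]
    congr 1
    omega
  have hidxF : (frattini G).index = p ^ Group.rank G := auxP_frattini_index hp hG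
  -- equal cards
  have hcards : Nat.card (frattini G) ≤ Nat.card (Subgroup.map M.subtype (frattini ↥M)) := by
    have h1 := Subgroup.card_mul_index (Subgroup.map M.subtype (frattini ↥M))
    have h2 := Subgroup.card_mul_index (frattini G)
    rw [hidxFm] at h1
    rw [hidxF] at h2
    have hppos : 0 < p ^ Group.rank G := Nat.pow_pos hp.pos
    exact le_of_eq (Nat.eq_of_mul_eq_mul_right hppos (h2.trans h1.symm))
  have heq : Subgroup.map M.subtype (frattini ↥M) = frattini G :=
    Subgroup.eq_of_le_of_card_ge hFmle hcards
  exact auxP_normal_of_frattini_le hp hG (heq ▸ hFmH)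

/-- If every maximal subgroup `M` of the finite `p`-group `G` satisfies
`d(M) = d(G) - 1`, then every subgroup of index `p²` in `G` is normal. -/
theorem stmt17 {p : ℕ} (hp : p.Prime) {G : Type*} [Group G] [Finite G]
    (hG : IsPGroup p G)
    (hmax : ∀ M : Subgroup G, IsCoatom M → Group.rank M = Group.rank G - 1) :
    ∀ H : Subgroup G, H.index = p ^ 2 → H.Normal :=
  auxP_main hp hG hmax
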